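/- Let a hexahedron have vertices v₁,…,v₈ ∈ ℝ³ (bottom face v₁v₂v₃v₄, top face v₅v₆v₇v₈, vᵢ below v_{i+4}). Under midpoint/centroid uniform refinement, consider the child hexahedron with bottom-face vertices v₁₅=(v₁+v₅)/2, v₁₅₆₂=(v₁+v₅+v₆+v₂)/4, v₀=(v₁+⋯+v₈)/8, v₁₄₈₅=(v₁+v₄+v₈+v₅)/4 and top-face vertices v₅, v₅₆=(v₅+v₆)/2, v₅₆₇₈=(v₅+v₆+v₇+v₈)/4, v₅₈=(v₅+v₈)/2. Then its bottom-face distortion vector equals (1/8)(d_bot + d_top) and its top-face distortion vector equals (1/4) d_top, where d_bot = v₁−v₂+v₃−v₄ and d_top = v₅−v₆+v₇−v₈. In particular max(|d_bot^child|, |d_top^child|) ≤ (1/4) max(|d_bot|, |d_top|). -/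
import Mathlib


noncomputable section

theorem stmt16 (v : Fin 8 → EuclideanSpace ℝ (Fin 3))
    (dbot dtop : EuclideanSpace ℝ (Fin 3))
    (hdbot : dbot = v 0 - v 1 + v 2 - v 3)
    (hdtop : dtop = v 4 - v 5 + v 6 - v 7)
    -- the child hexahedron's bottom and top faces
    (v15 v1562 v0c v1485 v56 v5678 v58 : EuclideanSpace ℝ (Fin 3))
    (h15 : v15 = (1/2 : ℝ) • (v 0 + v 4))
    (h1562 : v1562 = (1/4 : ℝ) • (v 0 + v 4 + v 5 + v 1))
    (h0c : v0c = (1/8 : ℝ) • (v 0 + v 1 + v 2 + v 3 + v 4 + v 5 + v 6 + v 7))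
    (h1485 : v1485 = (1/4 : ℝ) • (v 0 + v 3 + v 7 + v 4))
    (h56 : v56 = (1/2 : ℝ) • (v 4 + v 5))
    (h5678 : v5678 = (1/4 : ℝ) • (v 4 + v 5 + v 6 + v 7))
    (h58 : v58 = (1/2 : ℝ) • (v 4 + v 7)) :
    -- distortion vectors of the child faces
    v15 - v1562 + v0c - v1485 = (1/8 : ℝ) • (dbot + dtop) ∧
    v 4 - v56 + v5678 - v58 = (1/4 : ℝ) • dtop ∧
    max ‖v15 - v1562 + v0c - v1485‖ ‖v 4 - v56 + v5678 - v58‖ ≤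
      (1/4 : ℝ) * max ‖dbot‖ ‖dtop‖ := by
  subst hdbot hdtop h15 h1562 h0c h1485 h56 h5678 h58
  have e1 : (1/2 : ℝ) • (v 0 + v 4) - (1/4 : ℝ) • (v 0 + v 4 + v 5 + v 1) +
      (1/8 : ℝ) • (v 0 + v 1 + v 2 + v 3 + v 4 + v 5 + v 6 + v 7) -
      (1/4 : ℝ) • (v 0 + v 3 + v 7 + v 4) =
      (1/8 : ℝ) • ((v 0 - v 1 + v 2 - v 3) + (v 4 - v 5 + v 6 - v 7)) := by module
  have e2 : v 4 - (1/2 : ℝ) • (v 4 + v 5) + (1/4 : ℝ) • (v 4 + v 5 + v 6 + v 7) -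
      (1/2 : ℝ) • (v 4 + v 7) = (1/4 : ℝ) • (v 4 - v 5 + v 6 - v 7) := by module
  refine ⟨e1, e2, ?_⟩
  rw [e1, e2]
  set a := v 0 - v 1 + v 2 - v 3
  set b := v 4 - v 5 + v 6 - v 7
  have h1 : ‖(1/8 : ℝ) • (a + b)‖ ≤ (1/4 : ℝ) * max ‖a‖ ‖b‖ := by
    rw [norm_smul]
    calc ‖(1/8 : ℝ)‖ * ‖a + b‖ ≤ (1/8 : ℝ) * (‖a‖ + ‖b‖) := by
          rw [Real.norm_eq_abs]
          gcongr
          · rw [abs_of_nonneg]; norm_num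
          · exact norm_add_le a b
      _ ≤ (1/4 : ℝ) * max ‖a‖ ‖b‖ := by
          have := le_max_left ‖a‖ ‖b‖
          have := le_max_right ‖a‖ ‖b‖
          nlinarith
  have h2 : ‖(1/4 : ℝ) • b‖ ≤ (1/4 : ℝ) * max ‖a‖ ‖b‖ := by
    rw [norm_smul, Real.norm_eq_abs]
    have := le_max_right ‖a‖ ‖b‖
    rw [abs_of_nonneg (by norm_num : (0:ℝ) ≤ 1/4)]; nlinarith [norm_nonneg b]
  exact max_le h1 h2
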